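/- Let G be an infinite connected simple graph with finite vertex degrees, let 0 < q' < q, and let S ⊆ G be a union of q-islands of G with |S| ≤ 1/q'. Then S is disjoint from A_{q'}, i.e. S ⊆ G ∖ A_{q'}. -/
import Mathlib


open SimpleGraph

variable {V : Type*}

/-- The edge boundary `∂S` of a vertex set `S`: the set of edges of `G` with one endpoint
in `S` and the other endpoint outside `S`. -/
def edgeBdry (G : SimpleGraph V) (S : Set V) : Set (Sym2 V) :=
  {e | e ∈ G.edgeSet ∧ ∃ x ∈ S, ∃ y ∉ S, e = s(x, y)}

/-- The `q`-isolation `Δ_q S := q·|S| − |∂S|` of a vertex set `S`. -/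
noncomputable def isolation (G : SimpleGraph V) (q : ℝ) (S : Set V) : ℝ :=
  q * (S.ncard : ℝ) - ((edgeBdry G S).ncard : ℝ)

/-- A finite vertex set `S` is a `q`-isolated core if `Δ_q S > Δ_q A` for every
proper subset `A ⊊ S`. -/
def IsIsolatedCore (G : SimpleGraph V) (q : ℝ) (S : Set V) : Prop :=
  S.Finite ∧ ∀ A : Set V, A ⊂ S → isolation G q A < isolation G q S

/-- `A_q`: the union of all `q`-isolated cores of `G`. -/
def coreUnion (G : SimpleGraph V) (q : ℝ) : Set V :=
  ⋃₀ {S : Set V | IsIsolatedCore G q S}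

/-- A `q`-island: a connected component of (the subgraph of `G` induced by) `A_q`,
characterised as a nonempty connected subset of `A_q` which is closed under
adjacency within `A_q`. -/
def IsIsland (G : SimpleGraph V) (q : ℝ) (C : Set V) : Prop :=
  C ⊆ coreUnion G q ∧ (G.induce C).Connected ∧
    ∀ x ∈ C, ∀ y ∈ coreUnion G q, G.Adj x y → y ∈ C

/-- The anchored expansion constant
`i(G) = lim_{n→∞} inf { |∂K|/|K| : o ∈ K ⊆ G connected, n ≤ |K| < ∞ }`;
since the infima are nondecreasing in `n`, the limit equals the supremum over `n`. -/
noncomputable def anchoredExpansion (G : SimpleGraph V) (o : V) : ℝ :=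
  ⨆ n : ℕ, sInf {r : ℝ | ∃ K : Set V, o ∈ K ∧ K.Finite ∧ (G.induce K).Connected ∧
    n ≤ K.ncard ∧ r = ((edgeBdry G K).ncard : ℝ) / (K.ncard : ℝ)}

/-- The set of children of a vertex `x` in the tree rooted at `o`: the neighbours of `x`
at larger graph distance from the root. -/
def children (G : SimpleGraph V) (o x : V) : Set V :=
  {y | G.Adj x y ∧ G.dist o y = G.dist o x + 1}

lemma edgeBdry_empty' (G : SimpleGraph V) : edgeBdry G (∅ : Set V) = ∅ := by
  ext e
  simp [edgeBdry]

lemma isolation_empty' (G : SimpleGraph V) (q : ℝ) : isolation G q (∅ : Set V) = 0 := by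
  simp [isolation, edgeBdry_empty']

lemma edgeBdry_finite' (G : SimpleGraph V) (hloc : ∀ v : V, (G.neighborSet v).Finite)
    {S : Set V} (hS : S.Finite) : (edgeBdry G S).Finite := by
  have hsub : edgeBdry G S ⊆ ⋃ x ∈ S, (fun y => s(x, y)) '' (G.neighborSet x) := by
    rintro e ⟨he, x, hx, y, hy, rfl⟩
    exact Set.mem_biUnion hx ⟨y, (G.mem_edgeSet).mp he, rfl⟩
  exact Set.Finite.subset (hS.biUnion fun x _ => (hloc x).image _) hsub

lemma edgeBdry_union' (G : SimpleGraph V) {P Q : Set V} (hd : Disjoint P Q)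
    (hno : ∀ x ∈ P, ∀ y ∈ Q, ¬ G.Adj x y) :
    edgeBdry G (P ∪ Q) = edgeBdry G P ∪ edgeBdry G Q := by
  ext e
  constructor
  · rintro ⟨he, x, hx, y, hy, rfl⟩
    rcases hx with hx | hx
    · exact Or.inl ⟨he, x, hx, y, fun h => hy (Or.inl h), rfl⟩
    · exact Or.inr ⟨he, x, hx, y, fun h => hy (Or.inr h), rfl⟩
  · rintro (⟨he, x, hx, y, hy, rfl⟩ | ⟨he, x, hx, y, hy, rfl⟩)
    · refine ⟨he, x, Or.inl hx, y, ?_, rfl⟩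
      rintro (h | h)
      · exact hy h
      · exact hno x hx y h ((G.mem_edgeSet).mp he)
    · refine ⟨he, x, Or.inr hx, y, ?_, rfl⟩
      rintro (h | h)
      · exact hno y h x hx ((G.mem_edgeSet).mp he).symm
      · exact hy h

lemma edgeBdry_disj' (G : SimpleGraph V) {P Q : Set V} (hd : Disjoint P Q)
    (hno : ∀ x ∈ P, ∀ y ∈ Q, ¬ G.Adj x y) :
    Disjoint (edgeBdry G P) (edgeBdry G Q) := by
  rw [Set.disjoint_left]
  rintro e ⟨he, x, hx, y, hy, rfl⟩ ⟨he', x', hx', y', hy', heq⟩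
  rw [Sym2.eq_iff] at heq
  rcases heq with ⟨rfl, rfl⟩ | ⟨rfl, rfl⟩
  · exact (Set.disjoint_left.mp hd hx) hx'
  · exact hno x hx y hx' ((G.mem_edgeSet).mp he)

lemma isolation_union' (G : SimpleGraph V) (hloc : ∀ v : V, (G.neighborSet v).Finite)
    (q : ℝ) {P Q : Set V} (hP : P.Finite) (hQ : Q.Finite) (hd : Disjoint P Q)
    (hno : ∀ x ∈ P, ∀ y ∈ Q, ¬ G.Adj x y) :
    isolation G q (P ∪ Q) = isolation G q P + isolation G q Q := by
  have hbP := edgeBdry_finite' G hloc hP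
  have hbQ := edgeBdry_finite' G hloc hQ
  unfold isolation
  rw [edgeBdry_union' G hd hno, Set.ncard_union_eq (edgeBdry_disj' G hd hno) hbP hbQ,
    Set.ncard_union_eq hd hP hQ]
  push_cast
  ring

lemma core_mono' (G : SimpleGraph V) {q q' : ℝ} (hq : q' ≤ q) {T : Set V}
    (h : IsIsolatedCore G q' T) : IsIsolatedCore G q T := by
  refine ⟨h.1, fun A hA => ?_⟩
  have h1 := h.2 A hA
  have h2 : (A.ncard : ℝ) ≤ (T.ncard : ℝ) :=
    Nat.cast_le.mpr (Set.ncard_le_ncard hA.subset h.1)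
  unfold isolation at h1 ⊢
  nlinarith [mul_nonneg (sub_nonneg.mpr hq) (sub_nonneg.mpr h2)]

lemma core_split' (G : SimpleGraph V) (hloc : ∀ v : V, (G.neighborSet v).Finite)
    {q : ℝ} {P Q : Set V} (hd : Disjoint P Q)
    (hno : ∀ x ∈ P, ∀ y ∈ Q, ¬ G.Adj x y)
    (hcore : IsIsolatedCore G q (P ∪ Q)) : IsIsolatedCore G q P := by
  have hPfin := hcore.1.subset Set.subset_union_left
  have hQfin := hcore.1.subset Set.subset_union_right
  refine ⟨hPfin, fun A hA => ?_⟩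
  have hAfin := hPfin.subset hA.subset
  have hdA : Disjoint A Q := hd.mono_left hA.subset
  have hnoA : ∀ x ∈ A, ∀ y ∈ Q, ¬ G.Adj x y := fun x hx => hno x (hA.subset hx)
  have hss : A ∪ Q ⊂ P ∪ Q := by
    obtain ⟨x, hxP, hxA⟩ := Set.exists_of_ssubset hA
    refine (Set.ssubset_iff_of_subset (Set.union_subset_union_left Q hA.subset)).mpr
      ⟨x, Or.inl hxP, ?_⟩
    rintro (h | h)
    · exact hxA h
    · exact Set.disjoint_left.mp hd hxP h
  have h := hcore.2 (A ∪ Q) hss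
  rw [isolation_union' G hloc q hAfin hQfin hdA hnoA,
      isolation_union' G hloc q hPfin hQfin hd hno] at h
  linarith

lemma walk_cross' (G : SimpleGraph V) {P : Set V} {x y : V} (w : G.Walk x y) :
    x ∈ P → y ∉ P → ∃ a ∈ P, ∃ b, b ∉ P ∧ G.Adj a b := by
  induction w with
  | nil => intro hx hy; exact absurd hx hy
  | @cons a b c h p ih =>
    intro ha hc
    by_cases hb : b ∈ P
    · exact ih hb hc
    · exact ⟨a, ha, b, hb, h⟩

lemma edgeBdry_nonempty' (G : SimpleGraph V) [Infinite V] (hconn : G.Connected)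
    {P : Set V} (hP : P.Finite) (hne : P.Nonempty) : (edgeBdry G P).Nonempty := by
  obtain ⟨x, hx⟩ := hne
  obtain ⟨y, hy⟩ := hP.infinite_compl.nonempty
  obtain ⟨w⟩ := hconn.preconnected x y
  obtain ⟨a, ha, b, hb, hab⟩ := walk_cross' G w hx hy
  exact ⟨s(a, b), (G.mem_edgeSet).mpr hab, a, ha, b, hb, rfl⟩

/-- Let `G` be an infinite connected simple graph with finite vertex degrees, let
`0 < q' < q`, and let `S ⊆ G` be a union of `q`-islands of `G` with `|S| ≤ 1/q'`.
Then `S` is disjoint from `A_{q'}`, i.e. `S ⊆ G ∖ A_{q'}`. -/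
theorem stmt8 (G : SimpleGraph V) [Infinite V] (hconn : G.Connected)
    (hloc : ∀ v : V, (G.neighborSet v).Finite)
    (q q' : ℝ) (h0 : 0 < q') (hlt : q' < q) (S : Set V)
    (hunion : ∃ I : Set (Set V), (∀ C ∈ I, IsIsland G q C) ∧ S = ⋃₀ I)
    (hfin : S.Finite) (hcard : (S.ncard : ℝ) ≤ 1 / q') :
    S ⊆ (coreUnion G q')ᶜ := by
  
  obtain ⟨I, hI, rfl⟩ := hunion
  intro v hvS hv'
  obtain ⟨T, hT, hvT⟩ := hv'
  obtain ⟨C, hCI, hvC⟩ := hvS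
  have hC := hI C hCI
  have hTq : IsIsolatedCore G q T := core_mono' G hlt.le hT
  have hTsub : T ⊆ coreUnion G q := fun t ht => ⟨T, hTq, ht⟩
  have hd : Disjoint (T ∩ C) (T \ C) := by
    rw [Set.disjoint_left]
    rintro a ⟨_, haC⟩ ⟨_, haC'⟩
    exact haC' haC
  have hno : ∀ x ∈ T ∩ C, ∀ y ∈ T \ C, ¬ G.Adj x y := by
    rintro x ⟨hxT, hxC⟩ y ⟨hyT, hyC⟩ hadj
    exact hyC (hC.2.2 x hxC y (hTsub hyT) hadj)
  have hPQ : T ∩ C ∪ T \ C = T := Set.inter_union_diff T C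
  have hcoreP : IsIsolatedCore G q' (T ∩ C) := by
    refine core_split' G hloc hd hno ?_
    rw [hPQ]; exact hT
  have hvP : v ∈ T ∩ C := ⟨hvT, hvC⟩
  have hpos := hcoreP.2 ∅ (Set.empty_ssubset.mpr ⟨v, hvP⟩)
  rw [isolation_empty'] at hpos
  have hbne := edgeBdry_nonempty' G hconn hcoreP.1 ⟨v, hvP⟩
  have hbfin := edgeBdry_finite' G hloc hcoreP.1
  have h1 : (1 : ℝ) ≤ ((edgeBdry G (T ∩ C)).ncard : ℝ) := by
    exact_mod_cast (Set.ncard_pos hbfin).mpr hbne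
  have hPS : T ∩ C ⊆ ⋃₀ I := fun a ha => ⟨C, hCI, ha.2⟩
  have h2 : ((T ∩ C).ncard : ℝ) ≤ ((⋃₀ I).ncard : ℝ) :=
    Nat.cast_le.mpr (Set.ncard_le_ncard hPS hfin)
  have h3 : q' * ((⋃₀ I).ncard : ℝ) ≤ 1 := by
    have h4 := mul_le_mul_of_nonneg_left hcard h0.le
    rwa [mul_one_div, div_self h0.ne'] at h4
  unfold isolation at hpos
  nlinarith [mul_le_mul_of_nonneg_left h2 h0.le]
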